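/- Let Ŵ be the weight sequence maximizing F(W) = min_{i<j}(w_i − w_j)(λ_j − λ_i) over decreasing sequences with fixed endpoints w₁ = a > w_p = b, and let W̃ be the evenly spaced sequence w̃_i = a − (a − b)(i − 1)/(p − 1). Then F(Ŵ)/(p − 1) ≤ F(W̃) ≤ F(Ŵ). -/
import Mathlib


/-- `F(W) = min_{i<j} (w_i − w_j)(λ_j − λ_i)`. -/
noncomputable def Fmin {p : ℕ} (hp : 2 ≤ p) (lam w : Fin p → ℝ) : ℝ :=
  (Finset.univ.filter (fun q : Fin p × Fin p => q.1 < q.2)).inf'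
    ⟨(⟨0, by omega⟩, ⟨1, by omega⟩),
      by simp only [Finset.mem_filter, Finset.mem_univ, true_and, Fin.mk_lt_mk]; omega⟩
    (fun q => (w q.1 - w q.2) * (lam q.2 - lam q.1))

/-- For the evenly spaced weights `w̃ᵢ = a − (a−b)(i−1)/(p−1)`,
`F(Ŵ)/(p−1) ≤ F(W̃) ≤ F(Ŵ)`, where
`F(Ŵ) = (∑ₖ (λ_{k+1}−λ_k)⁻¹)⁻¹ (a − b)` is the optimal value. -/
theorem stmt_18 {p : ℕ} (hp : 2 ≤ p)
    (lam : Fin p → ℝ) (hlam : StrictMono lam)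
    (a b : ℝ) (hab : b < a) :
    (∑ m : Fin (p - 1), (lam ⟨m.1 + 1, by have := m.isLt; omega⟩
        - lam ⟨m.1, by have := m.isLt; omega⟩)⁻¹)⁻¹ * (a - b) / (p - 1 : ℝ)
      ≤ Fmin hp lam (fun i => a - (a - b) * (i.1 : ℝ) / (p - 1 : ℝ))
    ∧ Fmin hp lam (fun i => a - (a - b) * (i.1 : ℝ) / (p - 1 : ℝ))
      ≤ (∑ m : Fin (p - 1), (lam ⟨m.1 + 1, by have := m.isLt; omega⟩
          - lam ⟨m.1, by have := m.isLt; omega⟩)⁻¹)⁻¹ * (a - b) := by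
  have hp1 : (0:ℝ) < (p:ℝ) - 1 := by
    have : (2:ℝ) ≤ (p:ℝ) := by exact_mod_cast hp
    linarith
  have hab' : (0:ℝ) < a - b := by linarith
  set d : Fin (p-1) → ℝ := fun m => lam ⟨m.1 + 1, by have := m.isLt; omega⟩
        - lam ⟨m.1, by have := m.isLt; omega⟩ with hd
  have hdpos : ∀ m, 0 < d m := fun m => by
    have : (⟨m.1, by have := m.isLt; omega⟩ : Fin p) < ⟨m.1+1, by have := m.isLt; omega⟩ := by
      simp [Fin.mk_lt_mk]
    exact sub_pos.2 (hlam this)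
  set S : ℝ := ∑ m : Fin (p-1), (d m)⁻¹ with hSdef
  have hne : (Finset.univ : Finset (Fin (p-1))).Nonempty := by
    have : 0 < p - 1 := by omega
    exact ⟨⟨0, this⟩, Finset.mem_univ _⟩
  have hSpos : 0 < S := Finset.sum_pos (fun m _ => inv_pos.2 (hdpos m)) hne
  have hSinv_le : ∀ m, S⁻¹ ≤ d m := by
    intro m
    have h1 : (d m)⁻¹ ≤ S :=
      Finset.single_le_sum (fun i _ => le_of_lt (inv_pos.2 (hdpos i))) (Finset.mem_univ m)
    calc S⁻¹ ≤ ((d m)⁻¹)⁻¹ := by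
          exact inv_anti₀ (inv_pos.2 (hdpos m)) h1
      _ = d m := inv_inv _
  -- w function
  set w : Fin p → ℝ := fun i => a - (a - b) * (i.1 : ℝ) / (p - 1 : ℝ) with hw
  have hwdiff : ∀ i j : Fin p, w i - w j = (a-b) * ((j.1:ℝ) - (i.1:ℝ)) / ((p:ℝ)-1) := by
    intro i j; simp only [hw]; ring
  constructor
  · -- lower bound
    apply Finset.le_inf'
    rintro ⟨i, j⟩ hq
    simp only [Finset.mem_filter, Finset.mem_univ, true_and] at hq
    have hij : i.1 < j.1 := hq
    have hi1 : i.1 < p - 1 := by have := j.isLt; omega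
    have hdi : S⁻¹ ≤ lam j - lam i := by
      refine le_trans (hSinv_le ⟨i.1, hi1⟩) ?_
      have h1 : lam ⟨i.1 + 1, by omega⟩ ≤ lam j := by
        apply hlam.monotone
        show i.1 + 1 ≤ j.1
        omega
      have : (⟨i.1, by omega⟩ : Fin p) = i := rfl
      simp only [hd, this]
      linarith
    have hji : (1:ℝ) ≤ (j.1:ℝ) - (i.1:ℝ) := by
      have : (i.1:ℝ) + 1 ≤ (j.1:ℝ) := by exact_mod_cast hij
      linarith
    have hwij : (a-b)/((p:ℝ)-1) ≤ w i - w j := by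
      rw [hwdiff]
      rw [div_le_div_iff₀ hp1 hp1]
      nlinarith [mul_le_mul_of_nonneg_right (mul_le_mul_of_nonneg_left hji hab'.le) hp1.le]
    have hlampos : 0 < lam j - lam i := sub_pos.2 (hlam hij)
    calc S⁻¹ * (a-b) / ((p:ℝ)-1) = ((a-b)/((p:ℝ)-1)) * S⁻¹ := by ring
      _ ≤ (w i - w j) * (lam j - lam i) := by
          apply mul_le_mul hwij hdi (le_of_lt (inv_pos.2 hSpos))
          exact le_trans (div_pos hab' hp1).le hwij
  · -- upper bound: find m with average ≤ (d m)⁻¹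
    obtain ⟨m, _, hm⟩ := Finset.exists_le_of_sum_le hne (le_of_eq (show
        (∑ _x : Fin (p-1), S / ((p:ℝ)-1)) = ∑ m : Fin (p-1), (d m)⁻¹ by
      rw [Finset.sum_const, Finset.card_univ, Fintype.card_fin, nsmul_eq_mul]
      have : ((p-1:ℕ):ℝ) = (p:ℝ) - 1 := by
        have : (1:ℕ) ≤ p := by omega
        push_cast [Nat.cast_sub this]; ring
      rw [this]
      have h2 : ((p:ℝ)-1) * (S/((p:ℝ)-1)) = S := by field_simp
      rw [h2]))
    -- hm : S / ((p:ℝ)-1) ≤ (d m)⁻¹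
    have hdm : d m ≤ ((p:ℝ)-1) * S⁻¹ := by
      have h1 : 0 < S / ((p:ℝ)-1) := div_pos hSpos hp1
      have := (le_inv_comm₀ h1 (hdpos m)).mp hm
      calc d m ≤ (S / ((p:ℝ)-1))⁻¹ := this
        _ = ((p:ℝ)-1) * S⁻¹ := by rw [inv_div]; ring
    -- the pair (m, m+1)
    have hm1 : m.1 + 1 < p := by have := m.isLt; omega
    have hmem : ((⟨m.1, by omega⟩ : Fin p), (⟨m.1+1, hm1⟩ : Fin p)) ∈
        Finset.univ.filter (fun q : Fin p × Fin p => q.1 < q.2) := by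
      simp [Fin.mk_lt_mk]
    refine le_trans (Finset.inf'_le _ hmem) ?_
    have hval : (w ⟨m.1, by omega⟩ - w ⟨m.1+1, hm1⟩) * (lam ⟨m.1+1, hm1⟩ - lam ⟨m.1, by omega⟩)
        = (a-b)/((p:ℝ)-1) * d m := by
      rw [hwdiff]
      simp only [hd]
      push_cast
      ring
    rw [hval]
    calc (a-b)/((p:ℝ)-1) * d m ≤ (a-b)/((p:ℝ)-1) * (((p:ℝ)-1) * S⁻¹) := by
          apply mul_le_mul_of_nonneg_left hdm (le_of_lt (div_pos hab' hp1))
      _ = S⁻¹ * (a-b) := by field_simp
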